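/- Let F ∈ L^{N×NM}, let S be an equivalence relation on Δ_N, let S_u = {(a,a') : a' = F⋉u⋉a}, and define R₁ = S, R_{k+1} = (⋂_{u∈Δ_M} S_u⁻¹ ∘ R_k ∘ S_u) ∩ R_k. If k* satisfies R_{k*+1} = R_{k*}, then R_{k*} is the maximal relation contained in S satisfying the invariance property ((a,b)∈R ⟹ (F⋉u⋉a, F⋉u⋉b)∈R for all u ∈ Δ_M), and moreover R_{k*} is an equivalence relation on Δ_N. -/

import Mathlib

open Matrix

noncomputable section
open scoped Classical

/-- The `i`-th canonical basis vector of length `N`. -/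
def canon {N : ℕ} (i : Fin N) : Fin N → ℝ := Pi.single i 1

/-- `Delta N` is the set of canonical basis vectors of length `N`. -/
def Delta (N : ℕ) : Set (Fin N → ℝ) := {v | ∃ i, v = canon i}

/-- A logical matrix: every column is a canonical basis vector. -/
def IsLogical {m : ℕ} {J : Type*} (A : Matrix (Fin m) J ℝ) : Prop :=
  ∀ j : J, ∃ i : Fin m, (fun r => A r j) = canon i

/-- Full row rank for a logical matrix: every canonical vector occurs among the columns. -/
def FullRowRank {m : ℕ} {J : Type*} (A : Matrix (Fin m) J ℝ) : Prop :=
  ∀ i : Fin m, ∃ j : J, (fun r => A r j) = canon i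

/-- Semitensor product `F ⋉ u ⋉ x` for a BCN matrix `F ∈ L^{N×NM}`:
`F` times the Kronecker product `u ⊗ x`. -/
def stp {N M : ℕ} (F : Matrix (Fin N) (Fin M × Fin N) ℝ)
    (u : Fin M → ℝ) (x : Fin N → ℝ) : Fin N → ℝ :=
  F.mulVec (fun p => u p.1 * x p.2)

/-- Relational composition `A ∘ B`: `(a,c) ∈ A ∘ B ↔ ∃ b, (a,b) ∈ B ∧ (b,c) ∈ A`. -/
def rcomp {α : Type*} (A B : Set (α × α)) : Set (α × α) :=
  {p | ∃ b, (p.1, b) ∈ B ∧ (b, p.2) ∈ A}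

/-- Relational inverse. -/
def rinv {α : Type*} (A : Set (α × α)) : Set (α × α) := {p | (p.2, p.1) ∈ A}

/-- The transition relation `S_u = {(a, F⋉u⋉a) : a ∈ Δ_N}`. -/
def Su {N M : ℕ} (F : Matrix (Fin N) (Fin M × Fin N) ℝ) (u : Fin M → ℝ) :
    Set ((Fin N → ℝ) × (Fin N → ℝ)) :=
  {p | p.1 ∈ Delta N ∧ p.2 = stp F u p.1}

/-- The iteration `R₁ = S`, `R_{k+1} = (⋂_u S_u⁻¹ ∘ R_k ∘ S_u) ∩ R_k`
(`Rseq F S k` is `R_{k+1}` of the paper). -/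
def Rseq {N M : ℕ} (F : Matrix (Fin N) (Fin M × Fin N) ℝ)
    (S : Set ((Fin N → ℝ) × (Fin N → ℝ))) : ℕ → Set ((Fin N → ℝ) × (Fin N → ℝ))
  | 0 => S
  | k + 1 =>
    (⋂ u ∈ Delta M, rcomp (rinv (Su F u)) (rcomp (Rseq F S k) (Su F u))) ∩ Rseq F S k

/-!
`R_{k+1}` consists of the pairs of `R_k` whose successors under every input are again in
`R_k`. Each step preserves reflexivity on `Δ_N` (successors of basis vectors are basis vectors,
since `F` is logical), symmetry and transitivity, so every `R_k` is an equivalence relation.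
An invariant `R' ⊆ S` lies in every `R_k` by induction, and a fixed point `R_{k*+1} = R_{k*}`
says precisely that `R_{k*}` is invariant.
-/

def IsInvariantRel {N M : ℕ} (F : Matrix (Fin N) (Fin M × Fin N) ℝ)
    (R : Set ((Fin N → ℝ) × (Fin N → ℝ))) : Prop :=
  ∀ a b, (a, b) ∈ R → ∀ u ∈ Delta M, (stp F u a, stp F u b) ∈ R

structure IsEquivOn {α : Type*} (D : Set α) (R : Set (α × α)) : Prop where
  refl : ∀ a ∈ D, (a, a) ∈ R
  symm : ∀ a b, (a, b) ∈ R → (b, a) ∈ R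
  trans : ∀ a b c, (a, b) ∈ R → (b, c) ∈ R → (a, c) ∈ R

section

variable {N M : ℕ} {F : Matrix (Fin N) (Fin M × Fin N) ℝ}

lemma kronecker_canon_canon (p : Fin M) (i : Fin N) :
    (fun q : Fin M × Fin N => canon p q.1 * canon i q.2) = Pi.single (p, i) 1 := by
  ext ⟨q₁, q₂⟩
  by_cases h₁ : q₁ = p <;> by_cases h₂ : q₂ = i <;> simp [canon, h₁, h₂]

lemma stp_mem_Delta (hF : IsLogical F) {u : Fin M → ℝ} (hu : u ∈ Delta M)
    {a : Fin N → ℝ} (ha : a ∈ Delta N) : stp F u a ∈ Delta N := by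
  obtain ⟨p, rfl⟩ := hu
  obtain ⟨i, rfl⟩ := ha
  obtain ⟨j, hj⟩ := hF (p, i)
  refine ⟨j, ?_⟩
  rw [stp, kronecker_canon_canon, mulVec_single_one]
  exact hj

lemma mem_rcomp_rinv_Su_rcomp_Su {R : Set ((Fin N → ℝ) × (Fin N → ℝ))} {u : Fin M → ℝ}
    {a b : Fin N → ℝ} :
    (a, b) ∈ rcomp (rinv (Su F u)) (rcomp R (Su F u)) ↔
      a ∈ Delta N ∧ b ∈ Delta N ∧ (stp F u a, stp F u b) ∈ R := by
  simp only [rcomp, rinv, Su, Set.mem_ofPred_eq]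
  constructor
  · rintro ⟨_, ⟨_, ⟨ha, rfl⟩, hR⟩, hb, rfl⟩
    exact ⟨ha, hb, hR⟩
  · rintro ⟨ha, hb, hR⟩
    exact ⟨_, ⟨_, ⟨ha, rfl⟩, hR⟩, hb, rfl⟩

variable (F) in
lemma mem_Rseq_succ {S : Set ((Fin N → ℝ) × (Fin N → ℝ))} {k : ℕ} {a b : Fin N → ℝ} :
    (a, b) ∈ Rseq F S (k + 1) ↔
      (∀ u ∈ Delta M, a ∈ Delta N ∧ b ∈ Delta N ∧ (stp F u a, stp F u b) ∈ Rseq F S k) ∧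
        (a, b) ∈ Rseq F S k := by
  simp only [Rseq, Set.mem_inter_iff, Set.mem_iInter, mem_rcomp_rinv_Su_rcomp_Su]

lemma Rseq_subset (S : Set ((Fin N → ℝ) × (Fin N → ℝ))) : ∀ k, Rseq F S k ⊆ S
  | 0 => subset_rfl
  | k + 1 => Set.inter_subset_right.trans (Rseq_subset S k)

lemma isEquivOn_Rseq_succ (hF : IsLogical F) {S : Set ((Fin N → ℝ) × (Fin N → ℝ))} {k : ℕ}
    (h : IsEquivOn (Delta N) (Rseq F S k)) : IsEquivOn (Delta N) (Rseq F S (k + 1)) where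
  refl a ha := (mem_Rseq_succ F).2
    ⟨fun _ hu => ⟨ha, ha, h.refl _ (stp_mem_Delta hF hu ha)⟩, h.refl a ha⟩
  symm a b hab := by
    rw [mem_Rseq_succ] at hab ⊢
    refine ⟨fun u hu => ?_, h.symm _ _ hab.2⟩
    obtain ⟨ha, hb, hR⟩ := hab.1 u hu
    exact ⟨hb, ha, h.symm _ _ hR⟩
  trans a b c hab hbc := by
    rw [mem_Rseq_succ] at hab hbc ⊢
    refine ⟨fun u hu => ?_, h.trans _ _ _ hab.2 hbc.2⟩
    obtain ⟨ha, -, hab'⟩ := hab.1 u hu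
    obtain ⟨-, hc, hbc'⟩ := hbc.1 u hu
    exact ⟨ha, hc, h.trans _ _ _ hab' hbc'⟩

lemma isEquivOn_Rseq (hF : IsLogical F) {S : Set ((Fin N → ℝ) × (Fin N → ℝ))}
    (hS : IsEquivOn (Delta N) S) : ∀ k, IsEquivOn (Delta N) (Rseq F S k)
  | 0 => hS
  | k + 1 => isEquivOn_Rseq_succ hF (isEquivOn_Rseq hF hS k)

lemma isInvariantRel_Rseq_of_succ_eq {S : Set ((Fin N → ℝ) × (Fin N → ℝ))} {k : ℕ}
    (hfix : Rseq F S (k + 1) = Rseq F S k) : IsInvariantRel F (Rseq F S k) := by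
  intro a b hab u hu
  rw [← hfix, mem_Rseq_succ] at hab
  exact (hab.1 u hu).2.2

lemma subset_Rseq_of_isInvariantRel {S R : Set ((Fin N → ℝ) × (Fin N → ℝ))}
    (hS : S ⊆ Delta N ×ˢ Delta N) (hRS : R ⊆ S) (hR : IsInvariantRel F R) :
    ∀ k, R ⊆ Rseq F S k
  | 0 => hRS
  | k + 1 => by
    rintro ⟨a, b⟩ hab
    have hD := hS (hRS hab)
    exact (mem_Rseq_succ F).2
      ⟨fun u hu => ⟨hD.1, hD.2, subset_Rseq_of_isInvariantRel hS hRS hR k (hR a b hab u hu)⟩,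
        subset_Rseq_of_isInvariantRel hS hRS hR k hab⟩

end

/-- if the iteration stabilizes at `k*`, then `R_{k*}` is the maximal
relation contained in `S` satisfying the invariance property, and it is an equivalence
relation on `Δ_N`. (`Rseq F S k` is `R_{k+1}` of the paper.) -/
theorem stmt11 {N M : ℕ} (F : Matrix (Fin N) (Fin M × Fin N) ℝ) (hF : IsLogical F)
    (S : Set ((Fin N → ℝ) × (Fin N → ℝ)))
    (hsub : S ⊆ Delta N ×ˢ Delta N)
    (hrefl : ∀ a ∈ Delta N, (a, a) ∈ S)
    (hsymm : ∀ a b, (a, b) ∈ S → (b, a) ∈ S)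
    (htrans : ∀ a b c, (a, b) ∈ S → (b, c) ∈ S → (a, c) ∈ S)
    (kstar : ℕ) (hfix : Rseq F S (kstar + 1) = Rseq F S kstar) :
    Rseq F S kstar ⊆ S ∧
    (∀ a b, (a, b) ∈ Rseq F S kstar →
      ∀ u ∈ Delta M, (stp F u a, stp F u b) ∈ Rseq F S kstar) ∧
    (∀ R' : Set ((Fin N → ℝ) × (Fin N → ℝ)), R' ⊆ S →
      (∀ a b, (a, b) ∈ R' → ∀ u ∈ Delta M, (stp F u a, stp F u b) ∈ R') →
      R' ⊆ Rseq F S kstar) ∧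
    ((∀ a ∈ Delta N, (a, a) ∈ Rseq F S kstar) ∧
     (∀ a b, (a, b) ∈ Rseq F S kstar → (b, a) ∈ Rseq F S kstar) ∧
     (∀ a b c, (a, b) ∈ Rseq F S kstar → (b, c) ∈ Rseq F S kstar →
        (a, c) ∈ Rseq F S kstar)) := by
  have hequiv := isEquivOn_Rseq hF ⟨hrefl, hsymm, htrans⟩ kstar
  exact ⟨Rseq_subset S kstar, isInvariantRel_Rseq_of_succ_eq hfix,
    fun _ hR'S hinv => subset_Rseq_of_isInvariantRel hsub hR'S hinv kstar,
    hequiv.refl, hequiv.symm, hequiv.trans⟩
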